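/- Matsumoto–Amano normal form (existence, up to global phase): for every 2×2 complex matrix U lying in the multiplicative submonoid of Matrix ℂ (Fin 2) (Fin 2) generated by {H, S, T}, there exist a Boolean b, a list L of Booleans, a matrix C in the submonoid generated by {H, S}, and a complex number z with ‖z‖ = 1, such that U = z • ((if b then T else 1) * (L.map (fun c => if c then S * H * T else H * T)).prod * C). -/

import Mathlib

open Matrix Real

noncomputable def H : Matrix (Fin 2) (Fin 2) ℂ :=
  (1 / Real.sqrt 2 : ℂ) • !![1, 1; 1, -1]

noncomputable def S : Matrix (Fin 2) (Fin 2) ℂ := !![1, 0; 0, Complex.I]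

noncomputable def T : Matrix (Fin 2) (Fin 2) ℂ :=
  !![1, 0; 0, Complex.exp (Complex.I * Real.pi / 4)]

noncomputable def X : Matrix (Fin 2) (Fin 2) ℂ := H * S * S * H

lemma sqrt2_sq : (Real.sqrt 2 : ℂ) * (Real.sqrt 2 : ℂ) = 2 := by
  rw [← Complex.ofReal_mul, Real.mul_self_sqrt (by norm_num)]; norm_num

lemma sqrt2_ne : (Real.sqrt 2 : ℂ) ≠ 0 := by
  intro h
  have := sqrt2_sq
  rw [h] at this; simp at this

lemma omega_eq : Complex.exp (Complex.I * Real.pi / 4) = (Real.sqrt 2 : ℂ)⁻¹ * (1 + Complex.I) := by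
  have : Complex.I * Real.pi / 4 = ((Real.pi/4 : ℝ) : ℂ) * Complex.I := by
    push_cast; ring
  rw [this, Complex.exp_mul_I, ← Complex.ofReal_cos, ← Complex.ofReal_sin,
    Real.cos_pi_div_four, Real.sin_pi_div_four]
  have h2 := sqrt2_sq
  push_cast
  field_simp
  ring_nf
  rw [mul_comm] at h2
  linear_combination (1 + Complex.I) * h2 - (Real.sqrt 2:ℂ) * h2 * 0

noncomputable abbrev ω : ℂ := Complex.exp (Complex.I * Real.pi / 4)


lemma norm_omega : ‖ω‖ = 1 := by
  rw [Complex.norm_exp]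
  simp [Complex.mul_re, Complex.div_re]

lemma HH : H * H = 1 := by
  have h2 := sqrt2_sq
  ext i j
  fin_cases i <;> fin_cases j <;>
    simp [H, Matrix.mul_apply, Fin.sum_univ_two, Matrix.one_apply] <;>
    field_simp <;> linear_combination -h2

lemma Xval : X = !![0,1;1,0] := by
  have h2 := sqrt2_sq
  ext i j
  unfold X
  fin_cases i <;> fin_cases j <;>
    simp [H, S, Matrix.mul_apply, Fin.sum_univ_two] <;>
    field_simp <;> first | linear_combination Complex.I_sq | linear_combination -h2 - Complex.I_sq

lemma gST : S * T = T * S := by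
  ext i j
  fin_cases i <;> fin_cases j <;>
    simp [S, T, Matrix.mul_apply, Fin.sum_univ_two] <;> ring

lemma TT : T * T = S := by
  ext i j
  fin_cases i <;> fin_cases j <;>
    simp [S, T, Matrix.mul_apply, Fin.sum_univ_two]
  rw [← Complex.exp_add]
  have h : Complex.I * Real.pi / 4 + Complex.I * Real.pi / 4 = ((Real.pi/2 : ℝ):ℂ) * Complex.I := by push_cast; ring
  rw [h, Complex.exp_mul_I, ← Complex.ofReal_cos, ← Complex.ofReal_sin,
    Real.cos_pi_div_two, Real.sin_pi_div_two]
  simp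

lemma XT : X * T = ω • (T * (S * (S * (S * X)))) := by
  have h2 := sqrt2_sq
  rw [Xval]
  ext i j
  fin_cases i <;> fin_cases j <;>
    simp [S, T, Matrix.mul_apply, Fin.sum_univ_two, Matrix.smul_apply, omega_eq] <;>
    field_simp <;> ring_nf <;> simp [Complex.I_sq] <;> (first | linear_combination h2 | linear_combination Complex.I * Complex.I_sq | linear_combination h2 + Complex.I * Complex.I_sq | linear_combination h2 - Complex.I * Complex.I_sq | linear_combination -h2 | ring)

lemma omega_eq' : (ω:ℂ) = (Real.sqrt 2 : ℂ)⁻¹ * (1 + Complex.I) := omega_eq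

lemma omega_inv : (ω : ℂ)⁻¹ = (Real.sqrt 2 : ℂ)⁻¹ * (1 - Complex.I) := by
  have h2 := sqrt2_sq
  have hne := sqrt2_ne
  refine inv_eq_of_mul_eq_one_left ?_
  rw [omega_eq']
  field_simp
  linear_combination -h2 - Complex.I_sq

lemma HSH : H * S * H = ω⁻¹ • (S * H * (S * X)) := by
  have h2 := sqrt2_sq
  rw [Xval, omega_inv]
  ext i j
  fin_cases i <;> fin_cases j <;>
    simp [H, S, Matrix.mul_apply, Fin.sum_univ_two, Matrix.smul_apply] <;>
    field_simp <;> ring_nf <;> simp [Complex.I_sq] <;>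
    (first | linear_combination h2 | linear_combination Complex.I * Complex.I_sq | linear_combination h2 + Complex.I * Complex.I_sq | linear_combination h2 - Complex.I * Complex.I_sq | linear_combination -h2 | linear_combination -h2 + Complex.I*h2 | linear_combination Complex.I * h2 | ring)

abbrev Mat := Matrix (Fin 2) (Fin 2) ℂ

def Cl : Submonoid Mat := Submonoid.closure {H, S}
def MSX : Submonoid Mat := Submonoid.closure {S, X}

noncomputable def Gg : Option Bool → Mat
  | none => 1
  | some false => H
  | some true => S * H

lemma S_mem_MSX : S ∈ MSX := Submonoid.subset_closure (by simp)
lemma X_mem_MSX : X ∈ MSX := Submonoid.subset_closure (by simp)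
lemma H_mem_Cl : H ∈ Cl := Submonoid.subset_closure (by simp)
lemma S_mem_Cl : S ∈ Cl := Submonoid.subset_closure (by simp)
lemma X_mem_Cl : X ∈ Cl := by
  have := mul_mem (mul_mem (mul_mem H_mem_Cl S_mem_Cl) S_mem_Cl) H_mem_Cl
  simpa [X] using this
lemma MSX_le_Cl : MSX ≤ Cl := by
  rw [MSX, Submonoid.closure_le]
  rintro x (rfl | rfl)
  exacts [S_mem_Cl, X_mem_Cl]
lemma Gg_mem_Cl (g : Option Bool) : Gg g ∈ Cl := by
  match g with
  | none => exact one_mem _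
  | some false => exact H_mem_Cl
  | some true => exact mul_mem S_mem_Cl H_mem_Cl

lemma SSH : S * (S * H) = H * X := by
  simp [X, ← mul_assoc, HH]

lemma lemA : ∀ C ∈ Cl, ∃ (z : ℂ) (g : Option Bool) (k : Mat), k ∈ MSX ∧ ‖z‖ = 1 ∧ C = z • (Gg g * k) := by
  intro C hC
  induction hC using Submonoid.closure_induction_left with
  | one => exact ⟨1, none, 1, one_mem _, by simp, by simp [Gg]⟩
  | mul_left x hx y hy ih =>
    obtain ⟨z, g, k, hk, hz, rfl⟩ := ih
    simp only [Set.mem_insert_iff, Set.mem_singleton_iff] at hx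
    rcases hx with rfl | rfl
    · -- x = H
      match g with
      | none => exact ⟨z, some false, k, hk, hz, by simp [Gg, mul_smul_comm]⟩
      | some false =>
        refine ⟨z, none, k, hk, hz, ?_⟩
        simp [Gg, mul_smul_comm, ← mul_assoc, HH]
      | some true =>
        refine ⟨z * ω⁻¹, some true, S * (X * k), mul_mem S_mem_MSX (mul_mem X_mem_MSX hk), ?_, ?_⟩
        · rw [norm_mul, hz, norm_inv, norm_omega]; norm_num
        · rw [mul_smul_comm, show H * (Gg (some true) * k) = (H * S * H) * k by simp [Gg, mul_assoc], HSH,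
            smul_mul_assoc, smul_smul]
          simp [Gg, mul_assoc]
    · -- x = S
      match g with
      | none =>
        exact ⟨z, none, S * k, mul_mem S_mem_MSX hk, hz, by simp [Gg, mul_smul_comm, mul_assoc]⟩
      | some false =>
        exact ⟨z, some true, k, hk, hz, by simp [Gg, mul_smul_comm, mul_assoc]⟩
      | some true =>
        refine ⟨z, some false, X * k, mul_mem X_mem_MSX hk, hz, ?_⟩
        rw [mul_smul_comm, show S * (Gg (some true) * k) = (S * (S * H)) * k by simp [Gg, mul_assoc], SSH]
        simp [Gg, mul_assoc]

lemma lemB : ∀ k ∈ MSX, ∃ (z : ℂ) (k' : Mat), k' ∈ MSX ∧ ‖z‖ = 1 ∧ k * T = z • (T * k') := by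
  intro k hk
  induction hk using Submonoid.closure_induction_left with
  | one => exact ⟨1, 1, one_mem _, by simp, by simp⟩
  | mul_left x hx y hy ih =>
    obtain ⟨z, k', hk', hz, heq⟩ := ih
    simp only [Set.mem_insert_iff, Set.mem_singleton_iff] at hx
    rcases hx with rfl | rfl
    · -- x = S
      refine ⟨z, S * k', mul_mem S_mem_MSX hk', hz, ?_⟩
      rw [mul_assoc, heq, mul_smul_comm, ← mul_assoc, gST, mul_assoc]
    · -- x = X
      refine ⟨z * ω, S * (S * (S * (X * k'))), mul_mem S_mem_MSX (mul_mem S_mem_MSX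
        (mul_mem S_mem_MSX (mul_mem X_mem_MSX hk'))), ?_, ?_⟩
      · rw [norm_mul, hz, norm_omega]; norm_num
      · rw [mul_assoc, heq, mul_smul_comm, ← mul_assoc, XT, smul_mul_assoc, smul_smul]
        simp [mul_assoc]

noncomputable def Bm (L : List Bool) : Mat :=
  (L.map (fun c => if c then S * H * T else H * T)).prod

lemma Bm_nil : Bm [] = 1 := rfl

lemma Bm_cons (c : Bool) (L : List Bool) :
    Bm (c :: L) = (if c then S * H else H) * (T * Bm L) := by
  cases c <;> simp [Bm, mul_assoc]

lemma lemD : ∀ (n : ℕ) (L : List Bool) (b : Bool), 2 * L.length + b.toNat ≤ n →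
    ∀ C ∈ Cl, ∃ (z : ℂ) (b' : Bool) (L' : List Bool) (C' : Mat), C' ∈ Cl ∧ ‖z‖ = 1 ∧
      b'.toNat + L'.length ≤ b.toNat + L.length ∧
      C * ((if b then T else 1) * Bm L) = z • ((if b' then T else 1) * Bm L' * C') := by
  intro n
  induction n with
  | zero =>
    intro L b h C hC
    have hL : L = [] := by cases L with | nil => rfl | cons c L => simp at h
    have hb : b = false := by cases b <;> simp_all
    subst hL; subst hb
    exact ⟨1, false, [], C, hC, by simp, by simp, by simp [Bm_nil]⟩
  | succ n ih =>
    intro L b h C hC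
    have key : ∀ C₀ ∈ Cl, ∀ (L₀ : List Bool), 2 * L₀.length ≤ n →
        ∃ (z : ℂ) (b' : Bool) (L' : List Bool) (C' : Mat), C' ∈ Cl ∧ ‖z‖ = 1 ∧
          b'.toNat + L'.length ≤ 1 + L₀.length ∧
          C₀ * (T * Bm L₀) = z • ((if b' then T else 1) * Bm L' * C') := by
      intro C₀ hC₀ L₀ hlen
      obtain ⟨z₀, g, k, hk, hz₀, rfl⟩ := lemA C₀ hC₀
      obtain ⟨z₁, k₁, hk₁, hz₁, hkT⟩ := lemB k hk
      obtain ⟨z₂, b₂, L₂, C₂, hC₂, hz₂, hcnt₂, heq₂⟩ :=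
        ih L₀ false (by simpa using hlen) k₁ (MSX_le_Cl hk₁)
      have heq₂' : k₁ * Bm L₀ = z₂ • ((if b₂ then T else 1) * Bm L₂ * C₂) := by
        simpa using heq₂
      have base : (z₀ • (Gg g * k)) * (T * Bm L₀) =
          (z₀ * z₁ * z₂) • (Gg g * (T * ((if b₂ then T else 1) * Bm L₂ * C₂))) := by
        calc (z₀ • (Gg g * k)) * (T * Bm L₀)
            = z₀ • (Gg g * ((k * T) * Bm L₀)) := by
              simp [smul_mul_assoc, mul_assoc]
          _ = z₀ • (Gg g * ((z₁ • (T * k₁)) * Bm L₀)) := by rw [hkT]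
          _ = (z₀ * z₁) • (Gg g * (T * (k₁ * Bm L₀))) := by
              simp [smul_mul_assoc, mul_smul_comm, smul_smul, mul_assoc]
          _ = (z₀ * z₁) • (Gg g * (T * (z₂ • ((if b₂ then T else 1) * Bm L₂ * C₂)))) := by
              rw [heq₂']
          _ = (z₀ * z₁ * z₂) • (Gg g * (T * ((if b₂ then T else 1) * Bm L₂ * C₂))) := by
              simp [mul_smul_comm, smul_smul, mul_assoc]
      have hznorm : ‖z₀ * z₁ * z₂‖ = 1 := by
        simp [norm_mul, hz₀, hz₁, hz₂]
      cases b₂ with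
      | false =>
        have base' : (z₀ • (Gg g * k)) * (T * Bm L₀) =
            (z₀ * z₁ * z₂) • (Gg g * (T * (Bm L₂ * C₂))) := by
          simpa using base
        match g with
        | none =>
          refine ⟨z₀ * z₁ * z₂, true, L₂, C₂, hC₂, hznorm, ?_, ?_⟩
          · simp at hcnt₂ ⊢; omega
          · rw [base']; simp [Gg, mul_assoc]
        | some false =>
          refine ⟨z₀ * z₁ * z₂, false, false :: L₂, C₂, hC₂, hznorm, ?_, ?_⟩
          · simp at hcnt₂ ⊢; omega
          · rw [base']; simp [Gg, Bm_cons, mul_assoc]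
        | some true =>
          refine ⟨z₀ * z₁ * z₂, false, true :: L₂, C₂, hC₂, hznorm, ?_, ?_⟩
          · simp at hcnt₂ ⊢; omega
          · rw [base']; simp [Gg, Bm_cons, mul_assoc]
      | true =>
        have hlen₂ : L₂.length + 1 ≤ L₀.length := by simp at hcnt₂; omega
        obtain ⟨z₃, b₃, L₃, C₃, hC₃, hz₃, hcnt₃, heq₃⟩ :=
          ih L₂ false (by simp; omega) (Gg g * S) (mul_mem (Gg_mem_Cl g) S_mem_Cl)
        have heq₃' : (Gg g * S) * Bm L₂ = z₃ • ((if b₃ then T else 1) * Bm L₃ * C₃) := by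
          simpa using heq₃
        refine ⟨z₀ * z₁ * z₂ * z₃, b₃, L₃, C₃ * C₂, mul_mem hC₃ hC₂, ?_, ?_, ?_⟩
        · simp [norm_mul, hz₀, hz₁, hz₂, hz₃]
        · simp at hcnt₃ ⊢; omega
        · rw [base]
          have : Gg g * (T * ((if true then T else 1) * Bm L₂ * C₂)) =
              (((Gg g * S) * Bm L₂) * C₂) := by
            simp only [if_pos, if_true]
            rw [show T * (T * Bm L₂ * C₂) = (T * T) * (Bm L₂ * C₂) by simp [mul_assoc],
              TT]
            simp [mul_assoc]
          rw [this, heq₃', smul_mul_assoc, smul_smul]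
          simp [mul_assoc]
    cases b with
    | true =>
      obtain ⟨z, b', L', C', hC', hz, hcnt, heq⟩ := key C hC L (by simp at h; omega)
      exact ⟨z, b', L', C', hC', hz, by simpa using hcnt, by simpa using heq⟩
    | false =>
      cases L with
      | nil => exact ⟨1, false, [], C, hC, by simp, by simp, by simp [Bm_nil]⟩
      | cons c L₁ =>
        obtain ⟨z, b', L', C', hC', hz, hcnt, heq⟩ :=
          key (C * (if c then S * H else H))
            (mul_mem hC (by cases c <;> simp [H_mem_Cl, mul_mem S_mem_Cl H_mem_Cl]))
            L₁ (by simp at h; omega)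
        refine ⟨z, b', L', C', hC', hz, by simp at hcnt ⊢; omega, ?_⟩
        rw [show C * ((if false then T else 1) * Bm (c :: L₁)) =
            (C * (if c then S * H else H)) * (T * Bm L₁) by
          simp [Bm_cons, mul_assoc], heq]

lemma stepCl (x : Mat) (hx : x ∈ Cl) (b : Bool) (L : List Bool) (C : Mat) (z : ℂ)
    (hC : C ∈ Cl) (hz : ‖z‖ = 1) :
    ∃ (b' : Bool) (L' : List Bool) (C' : Mat) (z' : ℂ), C' ∈ Cl ∧ ‖z'‖ = 1 ∧
      x * (z • ((if b then T else 1) * Bm L * C)) =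
        z' • ((if b' then T else 1) * Bm L' * C') := by
  obtain ⟨z₁, b', L', C'', hC'', hz₁, _, heq⟩ :=
    lemD (2 * L.length + b.toNat) L b le_rfl x hx
  refine ⟨b', L', C'' * C, z * z₁, mul_mem hC'' hC, by simp [norm_mul, hz, hz₁], ?_⟩
  calc x * (z • ((if b then T else 1) * Bm L * C))
      = z • ((x * ((if b then T else 1) * Bm L)) * C) := by
        simp [mul_smul_comm, mul_assoc]
    _ = z • ((z₁ • ((if b' then T else 1) * Bm L' * C'')) * C) := by rw [heq]
    _ = (z * z₁) • ((if b' then T else 1) * Bm L' * (C'' * C)) := by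
        simp [smul_mul_assoc, smul_smul, mul_assoc]

theorem ma_normal_form_exists
    (U : Matrix (Fin 2) (Fin 2) ℂ)
    (hU : U ∈ Submonoid.closure ({H, S, T} : Set (Matrix (Fin 2) (Fin 2) ℂ))) :
    ∃ (b : Bool) (L : List Bool) (C : Matrix (Fin 2) (Fin 2) ℂ) (z : ℂ),
      C ∈ Submonoid.closure ({H, S} : Set (Matrix (Fin 2) (Fin 2) ℂ)) ∧
      ‖z‖ = 1 ∧
      U = z • ((if b then T else 1) *
        (L.map (fun c => if c then S * H * T else H * T)).prod * C) := by
  induction hU using Submonoid.closure_induction_left with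
  | one => exact ⟨false, [], 1, 1, one_mem _, by simp, by simp⟩
  | mul_left x hx y hy ih =>
    obtain ⟨b, L, C, z, hC, hz, rfl⟩ := ih
    have hBm : ∀ (L : List Bool),
        (L.map (fun c => if c then S * H * T else H * T)).prod = Bm L := fun _ => rfl
    simp only [Set.mem_insert_iff, Set.mem_singleton_iff] at hx
    rcases hx with rfl | rfl | rfl
    · obtain ⟨b', L', C', z', hC', hz', heq⟩ := stepCl H H_mem_Cl b L C z hC hz
      exact ⟨b', L', C', z', hC', hz', by simp only [hBm]; exact heq⟩
    · obtain ⟨b', L', C', z', hC', hz', heq⟩ := stepCl S S_mem_Cl b L C z hC hz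
      exact ⟨b', L', C', z', hC', hz', by simp only [hBm]; exact heq⟩
    · cases b with
      | false =>
        exact ⟨true, L, C, z, hC, hz, by
          simp only [hBm]
          simp [mul_smul_comm, mul_assoc]⟩
      | true =>
        obtain ⟨z₁, b', L', C'', hC'', hz₁, _, heq⟩ :=
          lemD (2 * L.length) L false le_rfl S S_mem_Cl
        refine ⟨b', L', C'' * C, z * z₁, mul_mem hC'' hC, by simp [norm_mul, hz, hz₁], ?_⟩
        simp only [hBm]
        calc T * (z • ((if true then T else 1) * Bm L * C))
            = z • ((T * T) * Bm L * C) := by simp [mul_smul_comm, mul_assoc]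
          _ = z • ((S * ((if false then T else 1) * Bm L)) * C) := by rw [TT]; simp [mul_assoc]
          _ = z • ((z₁ • ((if b' then T else 1) * Bm L' * C'')) * C) := by rw [heq]
          _ = (z * z₁) • ((if b' then T else 1) * Bm L' * (C'' * C)) := by
              simp [smul_mul_assoc, smul_smul, mul_assoc]
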